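/- arXiv:1807.01062 — 4 statements merged into one kernel-verified Lean document; each statement's English description precedes it below -/
import Mathlib

section
/- For a sequence of real numbers (a_k), the third iterate of the log-convexity operator satisfies: L³(a_k) = (a_{k+1}a_{k-1} - a_k²) · ( a_k² · det H₄ + det H₃⁻ · det H₃⁺ ), where H₄ is the 4×4 Hankel matrix with entries a_{k-3+i+j} (0 ≤ i,j ≤ 3), H₃⁻ is the 3×3 Hankel matrix with entries a_{k-3+i+j} (0 ≤ i,j ≤ 2), and H₃⁺ is the 3×3 Hankel matrix with entries a_{k-1+i+j} (0 ≤ i,j ≤ 2). -/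
set_option maxHeartbeats 4000000

private lemma det4 (M : Matrix (Fin 4) (Fin 4) ℝ) :
    M.det =
      M 0 0 * (M 1 1 * (M 2 2 * M 3 3 - M 2 3 * M 3 2) - M 1 2 * (M 2 1 * M 3 3 - M 2 3 * M 3 1)
        + M 1 3 * (M 2 1 * M 3 2 - M 2 2 * M 3 1))
      - M 0 1 * (M 1 0 * (M 2 2 * M 3 3 - M 2 3 * M 3 2) - M 1 2 * (M 2 0 * M 3 3 - M 2 3 * M 3 0)
        + M 1 3 * (M 2 0 * M 3 2 - M 2 2 * M 3 0))
      + M 0 2 * (M 1 0 * (M 2 1 * M 3 3 - M 2 3 * M 3 1) - M 1 1 * (M 2 0 * M 3 3 - M 2 3 * M 3 0)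
        + M 1 3 * (M 2 0 * M 3 1 - M 2 1 * M 3 0))
      - M 0 3 * (M 1 0 * (M 2 1 * M 3 2 - M 2 2 * M 3 1) - M 1 1 * (M 2 0 * M 3 2 - M 2 2 * M 3 0)
        + M 1 2 * (M 2 0 * M 3 1 - M 2 1 * M 3 0)) := by
  simp [Matrix.det_succ_row_zero, Fin.sum_univ_succ, Fin.succAbove,
    show (Fin.succ 2 : Fin 4) = 3 from rfl, show (Fin.castSucc 2 : Fin 4) = 2 from rfl,
    show (Fin.succ 1 : Fin 4) = 2 from rfl, show (Fin.castSucc 1 : Fin 4) = 1 from rfl,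
    show (Fin.succ 0 : Fin 4) = 1 from rfl, show (Fin.castSucc 0 : Fin 4) = 0 from rfl]
  ring_nf

/-- The log-convexity operator on `ℤ`-indexed real sequences. -/
def Lop (a : ℤ → ℝ) : ℤ → ℝ := fun k => a (k - 1) * a (k + 1) - a k ^ 2

/-- `L³(a_k) = (a_{k+1}a_{k-1} - a_k²) · (a_k² · det H₄ + det H₃⁻ · det H₃⁺)`,
where `H₄ = [a_{k-3+i+j}]_{0≤i,j≤3}`, `H₃⁻ = [a_{k-3+i+j}]_{0≤i,j≤2}`,
and `H₃⁺ = [a_{k-1+i+j}]_{0≤i,j≤2}`. -/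
theorem L3_det_identity (a : ℤ → ℝ) (k : ℤ) :
    Lop (Lop (Lop a)) k
      = (a (k + 1) * a (k - 1) - a k ^ 2) *
          ((a k) ^ 2 *
              Matrix.det (Matrix.of fun i j : Fin 4 => a (k - 3 + (i : ℤ) + (j : ℤ)))
            + Matrix.det (Matrix.of fun i j : Fin 3 => a (k - 3 + (i : ℤ) + (j : ℤ)))
              * Matrix.det (Matrix.of fun i j : Fin 3 => a (k - 1 + (i : ℤ) + (j : ℤ)))) := by
  rw [det4, Matrix.det_fin_three, Matrix.det_fin_three]
  simp only [Lop, Matrix.of_apply]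
  norm_num [show ((3:Fin 4):ℕ) = 3 from rfl, show ((2:Fin 4):ℕ) = 2 from rfl,
    show ((1:Fin 4):ℕ) = 1 from rfl, show ((0:Fin 4):ℕ) = 0 from rfl,
    show ((2:Fin 3):ℕ) = 2 from rfl, show ((1:Fin 3):ℕ) = 1 from rfl,
    show ((0:Fin 3):ℕ) = 0 from rfl]
  ring
end

section
/- Let (a_n)_{n≥0} be a sequence of nonnegative real numbers whose Hankel matrix [a_{i+j}]_{i,j≥0} is TP₃ (all minors of order ≤ 3 are nonnegative). Then (a_n) is 2-log-convex: for all k ≥ 2, (a_{k+2}a_k - a_{k+1}²)(a_k a_{k-2} - a_{k-1}²) ≥ (a_{k+1}a_{k-1} - a_k²)². -/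
/-- An infinite matrix `M : ℕ → ℕ → ℝ` is `TP_r` if all its minors of order `≤ r`
are nonnegative. -/
def IsTPr (r : ℕ) (M : ℕ → ℕ → ℝ) : Prop :=
  ∀ (m : ℕ), m ≤ r → ∀ (ri ci : Fin m → ℕ), StrictMono ri → StrictMono ci →
    0 ≤ Matrix.det (Matrix.of fun i j => M (ri i) (ci j))

/-- if `(aₙ)` is nonnegative and its Hankel matrix `[a_{i+j}]` is `TP₃`,
then `(aₙ)` is `2`-log-convex:
`(a_{k+2}a_k - a_{k+1}²)(a_k a_{k-2} - a_{k-1}²) ≥ (a_{k+1}a_{k-1} - a_k²)²` for `k ≥ 2`. -/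
theorem two_log_convex_of_hankel_TP3 (a : ℕ → ℝ) (ha : ∀ n, 0 ≤ a n)
    (hTP3 : IsTPr 3 (fun i j => a (i + j))) :
    ∀ k : ℕ, 2 ≤ k →
      (a (k + 1) * a (k - 1) - a k ^ 2) ^ 2 ≤
        (a (k + 2) * a k - a (k + 1) ^ 2) * (a k * a (k - 2) - a (k - 1) ^ 2) := by
  intro k hk
  obtain ⟨m, rfl⟩ : ∃ m, k = m + 2 := ⟨k - 2, by omega⟩
  have hD := hTP3 3 le_rfl (fun i => m + i) (fun i => (i : ℕ))
    (fun i j h => Nat.add_lt_add_left h m)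
    (fun _ _ h => h)
  rw [Matrix.det_fin_three] at hD
  simp only [Matrix.of_apply, Fin.isValue, Fin.val_zero, Fin.val_one, Fin.val_two] at hD
  have h2 : m + 2 - 1 = m + 1 := rfl
  have h3 : m + 2 - 2 = m := rfl
  have e : m+0+0 = m ∧ m+0+1 = m+1 ∧ m+0+2 = m+2 ∧ m+1+0 = m+1 ∧ m+1+1 = m+2 ∧
      m+1+2 = m+3 ∧ m+2+0 = m+2 ∧ m+2+1 = m+3 ∧ m+2+2 = m+4 := by omega
  obtain ⟨e1,e2,e3,e4,e5,e6,e7,e8,e9⟩ := e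
  rw [e1,e2,e3,e4,e5,e6,e7,e8,e9] at hD
  rw [h2, h3, show m+2+1 = m+3 from by omega, show m+2+2 = m+4 from by omega]
  have ha2 := ha (m + 2)
  nlinarith [mul_nonneg ha2 hD]
end

section
/- With the Riordan-type array A_{n,k} as above (parameters e, g, h with g ≥ e ≥ 0, h ≥ 0), the modified array s_{n,k}(q) = Σ_{i≥k} A_{n,i} q^{i−k} satisfies the recurrence s_{n,k}(q) = s_{n-1,k-1}(q) + g·s_{n-1,k}(q) + h·s_{n-1,k+1}(q) for n ≥ 1, k ≥ 1, and s_{n,0}(q) = (e+q)·s_{n-1,0}(q) + ((g−e)q + h)·s_{n-1,1}(q), with s_{0,0}=1 and s_{0,k}=0 for k>0. In particular s_{n,0}(q) equals the n-th row generating function Σ_k A_{n,k}q^k. -/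
open Polynomial Finset

/-- for the Riordan-type array `A_{n,k}`, the modified array
`s_{n,k}(q) = Σ_{i≥k} A_{n,i} q^{i-k}` satisfies the stated recurrence, with
`s_{0,0} = 1`, `s_{0,k} = 0` for `k > 0`, and `s_{n,0}` equals the `n`-th row
generating function. -/
theorem modified_array_recurrence (e g h : ℝ) (A : ℕ → ℕ → ℝ)
    (hge : e ≤ g) (he : 0 ≤ e) (hh : 0 ≤ h)
    (hA00 : A 0 0 = 1) (hA0k : ∀ k, 0 < k → A 0 k = 0)
    (hrec0 : ∀ n, A (n + 1) 0 = e * A n 0 + h * A n 1)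
    (hrec : ∀ n k, A (n + 1) (k + 1)
      = A n k + g * A n (k + 1) + h * A n (k + 2)) :
    let s : ℕ → ℕ → Polynomial ℝ :=
      fun n k => ∑ i ∈ Finset.Icc k n, C (A n i) * X ^ (i - k)
    (s 0 0 = 1) ∧ (∀ k, 0 < k → s 0 k = 0) ∧
    (∀ n k, s (n + 1) (k + 1)
      = s n k + C g * s n (k + 1) + C h * s n (k + 2)) ∧
    (∀ n, s (n + 1) 0
      = (C e + X) * s n 0 + (C (g - e) * X + C h) * s n 1) ∧
    (∀ n, s n 0 = ∑ k ∈ Finset.range (n + 1), C (A n k) * X ^ k) := by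
  intro s
  -- A n k = 0 for k > n
  have hz : ∀ n k, n < k → A n k = 0 := by
    intro n
    induction n with
    | zero => exact fun k hk => hA0k k hk
    | succ n ih =>
      intro k hk
      obtain ⟨j, rfl⟩ : ∃ j, k = j + 1 := ⟨k - 1, by omega⟩
      rw [hrec n j, ih j (by omega), ih (j+1) (by omega), ih (j+2) (by omega)]
      ring
  -- extend the sum range
  have ext_sum : ∀ n k m, n ≤ m →
      (∑ i ∈ Finset.Icc k m, C (A n i) * X ^ (i - k)) = s n k := by
    intro n k m hm
    refine (Finset.sum_subset (Finset.Icc_subset_Icc_right hm) ?_).symm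
    intro i hi hi'
    simp only [Finset.mem_Icc] at hi hi'
    rw [hz n i (by omega)]
    simp
  -- shift reindexing
  have shift : ∀ (B : ℕ → ℝ) (c a b : ℕ),
      (∑ i ∈ Finset.Icc (a+c) (b+c), C (B i) * X ^ (i - (a+c)))
        = ∑ i ∈ Finset.Icc a b, C (B (i+c)) * X ^ (i - a) := by
    intro B c a b
    rw [← Finset.map_add_right_Icc, Finset.sum_map]
    refine Finset.sum_congr rfl fun i hi => ?_
    simp only [addRightEmbedding_apply]
    rw [Nat.add_sub_add_right]
  -- structural lemma: s n k = C (A n k) + X * s n (k+1)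
  have hstep : ∀ n k, s n k = C (A n k) + X * s n (k+1) := by
    intro n k
    by_cases hk : k ≤ n
    · have h1 : Finset.Icc k n = insert k (Finset.Icc (k+1) n) := by
        rw [Finset.Icc_add_one_left_eq_Ioc, Finset.Ioc_insert_left hk]
      show (∑ i ∈ Finset.Icc k n, C (A n i) * X ^ (i - k)) = _
      rw [h1, Finset.sum_insert (by simp), Nat.sub_self, pow_zero, mul_one,
        Finset.mul_sum]
      congr 1
      refine Finset.sum_congr rfl fun i hi => ?_
      simp only [Finset.mem_Icc] at hi
      rw [show i - k = (i - (k+1)) + 1 by omega, pow_succ]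
      ring
    · have h1 : Finset.Icc k n = ∅ := Finset.Icc_eq_empty (by omega)
      have h2 : Finset.Icc (k+1) n = ∅ := Finset.Icc_eq_empty (by omega)
      show (∑ i ∈ Finset.Icc k n, C (A n i) * X ^ (i - k))
        = C (A n k) + X * ∑ i ∈ Finset.Icc (k+1) n, C (A n i) * X ^ (i - (k+1))
      rw [h1, h2, hz n k (by omega)]
      simp
  -- the main recurrence
  have hmain : ∀ n k, s (n + 1) (k + 1)
      = s n k + C g * s n (k + 1) + C h * s n (k + 2) := by
    intro n k
    have L : s (n+1) (k+1)
        = ∑ i ∈ Finset.Icc k n, C (A (n+1) (i+1)) * X ^ (i - k) := by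
      show (∑ i ∈ Finset.Icc (k+1) (n+1), C (A (n+1) i) * X ^ (i - (k+1))) = _
      exact shift (A (n+1)) 1 k n
    have M : s n (k+1) = ∑ i ∈ Finset.Icc k n, C (A n (i+1)) * X ^ (i - k) := by
      rw [← shift (A n) 1 k n, ext_sum n (k+1) (n+1) (by omega)]
    have N : s n (k+2) = ∑ i ∈ Finset.Icc k n, C (A n (i+2)) * X ^ (i - k) := by
      rw [← shift (A n) 2 k n, ext_sum n (k+2) (n+2) (by omega)]
    rw [L, M, N]
    show _ = (∑ i ∈ Finset.Icc k n, C (A n i) * X ^ (i - k)) + _ + _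
    rw [Finset.mul_sum, Finset.mul_sum, ← Finset.sum_add_distrib,
      ← Finset.sum_add_distrib]
    refine Finset.sum_congr rfl fun i hi => ?_
    rw [hrec n i]
    simp only [map_add, map_mul]
    ring
  refine ⟨?_, ?_, hmain, ?_, ?_⟩
  · show (∑ i ∈ Finset.Icc 0 0, C (A 0 i) * X ^ (i - 0)) = 1
    simp [hA00]
  · intro k hk
    show (∑ i ∈ Finset.Icc k 0, C (A 0 i) * X ^ (i - k)) = 0
    rw [Finset.Icc_eq_empty (by omega), Finset.sum_empty]
  · intro n
    rw [hstep (n+1) 0, hmain n 0, hrec0 n, hstep n 0, hstep n 1]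
    simp only [map_add, map_mul, map_sub]
    ring
  · intro n
    show (∑ i ∈ Finset.Icc 0 n, C (A n i) * X ^ (i - 0)) = _
    rw [← Finset.Ico_add_one_right_eq_Icc, ← Finset.range_eq_Ico]
    simp
end

section
/- The Bell polynomials B_n(q) = Σ_k S(n,k) q^k (S(n,k) the Stirling numbers of the second kind) form a 3-q-log-convex sequence: L(B)_n, L²(B)_n, and L³(B)_n all have nonnegative coefficients as polynomials in q, where L(f)_n = f_{n-1}f_{n+1} − f_n². -/
open Polynomial

/-- Stirling numbers of the second kind `S(n,k)`. -/
def stirling2 : ℕ → ℕ → ℕ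
  | 0, 0 => 1
  | 0, _ + 1 => 0
  | _ + 1, 0 => 0
  | n + 1, k + 1 => (k + 1) * stirling2 n (k + 1) + stirling2 n k

/-- The Bell polynomials `Bₙ(q) = Σ_k S(n,k) q^k`. -/
noncomputable def bellPoly (n : ℕ) : Polynomial ℝ :=
  ∑ k ∈ Finset.range (n + 1), C (stirling2 n k : ℝ) * X ^ k

/-- The `q`-log-convexity operator on sequences of polynomials,
reindexed: `L(f)ₙ = fₙ f_{n+2} − f_{n+1}²`. -/
noncomputable def Lq (f : ℕ → Polynomial ℝ) : ℕ → Polynomial ℝ :=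
  fun n => f n * f (n + 2) - f (n + 1) ^ 2

/-! ### Basic facts about `stirling2` and `bellPoly` -/

lemma stirling2_eq_zero {n k : ℕ} (h : n < k) : stirling2 n k = 0 := by
  induction n generalizing k with
  | zero => cases k with | zero => omega | succ k => rfl
  | succ n ih =>
    cases k with
    | zero => omega
    | succ k =>
      have h1 : n < k + 1 := by omega
      have h2 : n < k := by omega
      simp [stirling2, ih h1, ih h2]

lemma coeff_bellPoly (n k : ℕ) : (bellPoly n).coeff k = stirling2 n k := by
  rw [bellPoly, finset_sum_coeff]
  simp only [coeff_C_mul, coeff_X_pow, mul_ite, mul_one, mul_zero]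
  rw [Finset.sum_ite_eq (Finset.range (n+1)) k fun x => ((stirling2 n x : ℝ))]
  by_cases h : k ∈ Finset.range (n+1)
  · simp [h]
  · simp only [h, if_false]
    rw [stirling2_eq_zero (by simpa using h)]
    simp

lemma bellPoly_succ (n : ℕ) :
    bellPoly (n + 1) = X * (bellPoly n + derivative (bellPoly n)) := by
  ext m
  cases m with
  | zero =>
    rw [coeff_bellPoly, mul_comm, coeff_mul_X_zero]
    norm_num [stirling2]
  | succ m =>
    rw [coeff_bellPoly, coeff_X_mul, coeff_add, coeff_bellPoly, coeff_derivative,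
      coeff_bellPoly]
    show ((m + 1) * stirling2 n (m + 1) + stirling2 n m : ℕ) = (_ : ℝ)
    push_cast
    ring

/-! ### Hasse derivative helpers -/

lemma coeff_X_mul_zero' (p : ℝ[X]) : (X * p).coeff 0 = 0 := by
  rw [mul_comm, coeff_mul_X_zero]

lemma hasseDeriv_X_mul (k : ℕ) (p : ℝ[X]) :
    hasseDeriv (k + 1) (X * p) = X * hasseDeriv (k + 1) p + hasseDeriv k p := by
  ext i
  rw [hasseDeriv_coeff, coeff_add, hasseDeriv_coeff]
  cases i with
  | zero =>
    rw [coeff_X_mul_zero']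
    rw [show (0:ℕ) + (k + 1) = k + 1 by omega, show (0:ℕ) + k = k by omega, coeff_X_mul]
    simp [Nat.choose_self]
  | succ i =>
    rw [coeff_X_mul, hasseDeriv_coeff]
    rw [show i + 1 + (k + 1) = (i + k + 1) + 1 by omega, coeff_X_mul]
    rw [show i + (k + 1) = i + k + 1 by omega, show i + 1 + k = i + k + 1 by omega]
    have hch : (i + k + 1 + 1).choose (k+1) = (i + k + 1).choose k + (i + k + 1).choose (k + 1) :=
      Nat.choose_succ_succ (i + k + 1) k
    rw [hch]
    push_cast
    ring

lemma hasseDeriv_derivative' (k : ℕ) (p : ℝ[X]) :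
    hasseDeriv k (derivative p) = ((k : ℝ[X]) + 1) * hasseDeriv (k + 1) p := by
  have := hasseDeriv_comp (R := ℝ) k 1
  have h2 := congrFun (congrArg DFunLike.coe this) p
  simp only [LinearMap.comp_apply, LinearMap.smul_apply] at h2
  rw [hasseDeriv_one] at h2
  rw [h2, Nat.choose_succ_self_right, nsmul_eq_mul]
  push_cast
  ring

/-! ### The triangular array `a n k` (Hasse derivatives of Bell polynomials)
and its bidiagonal-factored recurrence. -/

noncomputable def a (n k : ℕ) : ℝ[X] := hasseDeriv k (bellPoly n)

lemma bell_eq (n : ℕ) : bellPoly n = a n 0 := by simp [a, hasseDeriv_zero']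

lemma aS0 (n : ℕ) : a (n + 1) 0 = X * a n 0 + X * a n 1 := by
  simp only [a, hasseDeriv_zero', bellPoly_succ]
  rw [show hasseDeriv 1 (bellPoly n) = derivative (bellPoly n) from hasseDeriv_one' _]
  ring

lemma aSucc (n k : ℕ) : a (n + 1) (k + 1) =
    a n k + ((k : ℝ[X]) + 1) * a n (k + 1) + X * a n (k + 1)
      + ((k : ℝ[X]) + 2) * (X * a n (k + 2)) := by
  simp only [a, bellPoly_succ, hasseDeriv_X_mul, map_add, hasseDeriv_derivative']
  push_cast
  ring

noncomputable def bb (n k : ℕ) : ℝ[X] := a n k + ((k : ℝ[X]) + 1) * a n (k + 1)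

lemma L2B (n : ℕ) : a (n + 1) 0 = X * bb n 0 := by
  rw [aS0, bb]; push_cast; ring

lemma L2A (n k : ℕ) : a (n + 1) (k + 1) = bb n k + X * bb n (k + 1) := by
  rw [aSucc, bb, bb]; push_cast; ring

lemma aS1 (n : ℕ) : a (n + 1) 1 = a n 0 + a n 1 + X * a n 1 + 2 * (X * a n 2) := by
  have h := aSucc n 0; norm_num at h; rw [h]

lemma aS2 (n : ℕ) : a (n + 1) 2 = a n 1 + 2 * a n 2 + X * a n 2 + 3 * (X * a n 3) := by
  have h := aSucc n 1; norm_num at h; rw [h]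

lemma a_zero_succ (k : ℕ) : a 0 (k + 1) = 0 := by
  ext i
  rw [a, hasseDeriv_coeff, coeff_bellPoly]
  rw [stirling2_eq_zero (by omega)]
  simp

/-! ### Coefficientwise nonnegativity -/

def Pn (p : ℝ[X]) : Prop := ∀ i, 0 ≤ p.coeff i

lemma Pn_zero : Pn (0 : ℝ[X]) := fun i => by simp

lemma Pn_add {p q : ℝ[X]} (hp : Pn p) (hq : Pn q) : Pn (p + q) := fun i => by
  rw [coeff_add]; exact add_nonneg (hp i) (hq i)

lemma Pn_mul {p q : ℝ[X]} (hp : Pn p) (hq : Pn q) : Pn (p * q) := fun i => by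
  rw [coeff_mul]
  exact Finset.sum_nonneg fun x _ => mul_nonneg (hp x.1) (hq x.2)

lemma Pn_X : Pn (X : ℝ[X]) := fun i => by
  rw [coeff_X]
  split <;> norm_num

lemma Pn_natCast (m : ℕ) : Pn ((m : ℝ[X])) := fun i => by
  rw [coeff_natCast_ite]
  split <;> positivity

lemma Pn_castSucc (k : ℕ) : Pn ((k : ℝ[X]) + 1) := by
  have := Pn_natCast (k + 1)
  push_cast at this
  exact this

lemma Pn_pow {p : ℝ[X]} (hp : Pn p) (m : ℕ) : Pn (p ^ m) := by
  induction m with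
  | zero => simpa using Pn_natCast 1
  | succ m ih => rw [pow_succ]; exact Pn_mul ih hp

lemma Pn_ofNat2 : Pn (2 : ℝ[X]) := by have := Pn_natCast 2; push_cast at this; exact this
lemma Pn_ofNat3 : Pn (3 : ℝ[X]) := by have := Pn_natCast 3; push_cast at this; exact this
lemma Pn_ofNat4 : Pn (4 : ℝ[X]) := by have := Pn_natCast 4; push_cast at this; exact this

lemma Pn_a (n k : ℕ) : Pn (a n k) := fun i => by
  rw [a, hasseDeriv_coeff, coeff_bellPoly]
  positivity

/-! ### Consecutive-row minors (wedge coordinates) of the array, and their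
evolution through the two bidiagonal factors of the production matrix. -/

noncomputable def w2 (n i j : ℕ) : ℝ[X] := a n i * a (n+1) j - a n j * a (n+1) i
noncomputable def u2 (n i j : ℕ) : ℝ[X] := bb n i * bb (n+1) j - bb n j * bb (n+1) i
noncomputable def w3 (n i j k : ℕ) : ℝ[X] :=
  a n i * w2 (n+1) j k - a n j * w2 (n+1) i k + a n k * w2 (n+1) i j
noncomputable def u3 (n i j k : ℕ) : ℝ[X] :=
  bb n i * u2 (n+1) j k - bb n j * u2 (n+1) i k + bb n k * u2 (n+1) i j
noncomputable def w4 (n i j k l : ℕ) : ℝ[X] :=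
  a n i * w3 (n+1) j k l - a n j * w3 (n+1) i k l
    + a n k * w3 (n+1) i j l - a n l * w3 (n+1) i j k
noncomputable def u4 (n i j k l : ℕ) : ℝ[X] :=
  bb n i * u3 (n+1) j k l - bb n j * u3 (n+1) i k l
    + bb n k * u3 (n+1) i j l - bb n l * u3 (n+1) i j k

lemma w2_diag (n i : ℕ) : w2 n i i = 0 := by simp only [w2]; ring
lemma u2_diag (n i : ℕ) : u2 n i i = 0 := by simp only [u2]; ring
lemma w3_eq12 (n i k : ℕ) : w3 n i i k = 0 := by simp only [w3, w2]; ring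
lemma w3_eq23 (n i j : ℕ) : w3 n i j j = 0 := by simp only [w3, w2]; ring
lemma u3_eq12 (n i k : ℕ) : u3 n i i k = 0 := by simp only [u3, u2]; ring
lemma u3_eq23 (n i j : ℕ) : u3 n i j j = 0 := by simp only [u3, u2]; ring
lemma w4_eq12 (n i k l : ℕ) : w4 n i i k l = 0 := by simp only [w4, w3, w2]; ring
lemma w4_eq23 (n i j l : ℕ) : w4 n i j j l = 0 := by simp only [w4, w3, w2]; ring
lemma w4_eq34 (n i j k : ℕ) : w4 n i j k k = 0 := by simp only [w4, w3, w2]; ring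
lemma u4_eq12 (n i k l : ℕ) : u4 n i i k l = 0 := by simp only [u4, u3, u2]; ring
lemma u4_eq23 (n i j l : ℕ) : u4 n i j j l = 0 := by simp only [u4, u3, u2]; ring
lemma u4_eq34 (n i j k : ℕ) : u4 n i j k k = 0 := by simp only [u4, u3, u2]; ring

/-- Pushing a 2×2 minor through the upper bidiagonal factor. -/
lemma U2 (n i j : ℕ) : u2 n i j =
    w2 n i j + ((j : ℝ[X]) + 1) * w2 n i (j+1) + ((i : ℝ[X]) + 1) * w2 n (i+1) j
      + ((i : ℝ[X]) + 1) * (((j : ℝ[X]) + 1) * w2 n (i+1) (j+1)) := by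
  simp only [u2, bb, w2]; push_cast; ring

/-- Pushing a 2×2 minor through the lower bidiagonal factor (interior case). -/
lemma W2S (n i j : ℕ) : w2 (n+1) (i+1) (j+1) =
    u2 n i j + X * u2 n i (j+1) + X * u2 n (i+1) j + X^2 * u2 n (i+1) (j+1) := by
  simp only [w2]
  rw [L2A n i, L2A n j, L2A (n+1) i, L2A (n+1) j]
  simp only [u2]; ring

/-- Pushing a 2×2 minor through the lower bidiagonal factor (boundary case). -/
lemma W2S0 (n j : ℕ) : w2 (n+1) 0 (j+1) = X * u2 n 0 j + X^2 * u2 n 0 (j+1) := by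
  simp only [w2]
  rw [L2B n, L2B (n+1), L2A n j, L2A (n+1) j]
  simp only [u2]; ring

lemma U3 (n i j k : ℕ) : u3 n i j k =
    w3 n i j k
    + ((k : ℝ[X]) + 1) * w3 n i j (k+1)
    + ((j : ℝ[X]) + 1) * w3 n i (j+1) k
    + ((j : ℝ[X]) + 1) * (((k : ℝ[X]) + 1) * w3 n i (j+1) (k+1))
    + ((i : ℝ[X]) + 1) * w3 n (i+1) j k
    + ((i : ℝ[X]) + 1) * (((k : ℝ[X]) + 1) * w3 n (i+1) j (k+1))
    + ((i : ℝ[X]) + 1) * (((j : ℝ[X]) + 1) * w3 n (i+1) (j+1) k)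
    + ((i : ℝ[X]) + 1) * (((j : ℝ[X]) + 1) * (((k : ℝ[X]) + 1) * w3 n (i+1) (j+1) (k+1))) := by
  simp only [u3, u2, bb, w3, w2]; push_cast; ring

lemma W3S (n i j k : ℕ) : w3 (n+1) (i+1) (j+1) (k+1) =
    u3 n i j k + X * u3 n i j (k+1) + X * u3 n i (j+1) k + X^2 * u3 n i (j+1) (k+1)
    + X * u3 n (i+1) j k + X^2 * u3 n (i+1) j (k+1) + X^2 * u3 n (i+1) (j+1) k
    + X^3 * u3 n (i+1) (j+1) (k+1) := by
  simp only [w3, w2]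
  rw [L2A n i, L2A n j, L2A n k, L2A (n+1) i, L2A (n+1) j, L2A (n+1) k,
    L2A (n+1+1) i, L2A (n+1+1) j, L2A (n+1+1) k]
  simp only [u3, u2]; ring

lemma W3S0 (n j k : ℕ) : w3 (n+1) 0 (j+1) (k+1) =
    X * u3 n 0 j k + X^2 * u3 n 0 j (k+1) + X^2 * u3 n 0 (j+1) k
      + X^3 * u3 n 0 (j+1) (k+1) := by
  simp only [w3, w2]
  rw [L2B n, L2B (n+1), L2B (n+1+1), L2A n j, L2A n k, L2A (n+1) j, L2A (n+1) k,
    L2A (n+1+1) j, L2A (n+1+1) k]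
  simp only [u3, u2]; ring

lemma U4 (n i j k l : ℕ) : u4 n i j k l =
    w4 n i j k l
    + ((l : ℝ[X]) + 1) * w4 n i j k (l+1)
    + ((k : ℝ[X]) + 1) * w4 n i j (k+1) l
    + ((k : ℝ[X]) + 1) * (((l : ℝ[X]) + 1) * w4 n i j (k+1) (l+1))
    + ((j : ℝ[X]) + 1) * w4 n i (j+1) k l
    + ((j : ℝ[X]) + 1) * (((l : ℝ[X]) + 1) * w4 n i (j+1) k (l+1))
    + ((j : ℝ[X]) + 1) * (((k : ℝ[X]) + 1) * w4 n i (j+1) (k+1) l)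
    + ((j : ℝ[X]) + 1) * (((k : ℝ[X]) + 1) * (((l : ℝ[X]) + 1) * w4 n i (j+1) (k+1) (l+1)))
    + ((i : ℝ[X]) + 1) * w4 n (i+1) j k l
    + ((i : ℝ[X]) + 1) * (((l : ℝ[X]) + 1) * w4 n (i+1) j k (l+1))
    + ((i : ℝ[X]) + 1) * (((k : ℝ[X]) + 1) * w4 n (i+1) j (k+1) l)
    + ((i : ℝ[X]) + 1) * (((k : ℝ[X]) + 1) * (((l : ℝ[X]) + 1) * w4 n (i+1) j (k+1) (l+1)))
    + ((i : ℝ[X]) + 1) * (((j : ℝ[X]) + 1) * w4 n (i+1) (j+1) k l)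
    + ((i : ℝ[X]) + 1) * (((j : ℝ[X]) + 1) * (((l : ℝ[X]) + 1) * w4 n (i+1) (j+1) k (l+1)))
    + ((i : ℝ[X]) + 1) * (((j : ℝ[X]) + 1) * (((k : ℝ[X]) + 1) * w4 n (i+1) (j+1) (k+1) l))
    + ((i : ℝ[X]) + 1) * (((j : ℝ[X]) + 1) * (((k : ℝ[X]) + 1) * (((l : ℝ[X]) + 1) * w4 n (i+1) (j+1) (k+1) (l+1)))) := by
  simp only [u4, u3, u2, bb, w4, w3, w2]; push_cast; ring

lemma W4S (n i j k l : ℕ) : w4 (n+1) (i+1) (j+1) (k+1) (l+1) =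
    u4 n i j k l + X * u4 n i j k (l+1) + X * u4 n i j (k+1) l + X^2 * u4 n i j (k+1) (l+1)
    + X * u4 n i (j+1) k l + X^2 * u4 n i (j+1) k (l+1) + X^2 * u4 n i (j+1) (k+1) l
    + X^3 * u4 n i (j+1) (k+1) (l+1)
    + X * u4 n (i+1) j k l + X^2 * u4 n (i+1) j k (l+1) + X^2 * u4 n (i+1) j (k+1) l
    + X^3 * u4 n (i+1) j (k+1) (l+1)
    + X^2 * u4 n (i+1) (j+1) k l + X^3 * u4 n (i+1) (j+1) k (l+1)
    + X^3 * u4 n (i+1) (j+1) (k+1) l + X^4 * u4 n (i+1) (j+1) (k+1) (l+1) := by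
  simp only [w4, w3, w2]
  rw [L2A n i, L2A n j, L2A n k, L2A n l, L2A (n+1) i, L2A (n+1) j, L2A (n+1) k, L2A (n+1) l,
    L2A (n+1+1) i, L2A (n+1+1) j, L2A (n+1+1) k, L2A (n+1+1) l,
    L2A (n+1+1+1) i, L2A (n+1+1+1) j, L2A (n+1+1+1) k, L2A (n+1+1+1) l]
  simp only [u4, u3, u2]; ring

lemma W4S0 (n j k l : ℕ) : w4 (n+1) 0 (j+1) (k+1) (l+1) =
    X * u4 n 0 j k l + X^2 * u4 n 0 j k (l+1) + X^2 * u4 n 0 j (k+1) l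
    + X^3 * u4 n 0 j (k+1) (l+1)
    + X^2 * u4 n 0 (j+1) k l + X^3 * u4 n 0 (j+1) k (l+1) + X^3 * u4 n 0 (j+1) (k+1) l
    + X^4 * u4 n 0 (j+1) (k+1) (l+1) := by
  simp only [w4, w3, w2]
  rw [L2B n, L2B (n+1), L2B (n+1+1), L2B (n+1+1+1),
    L2A n j, L2A n k, L2A n l, L2A (n+1) j, L2A (n+1) k, L2A (n+1) l,
    L2A (n+1+1) j, L2A (n+1+1) k, L2A (n+1+1) l,
    L2A (n+1+1+1) j, L2A (n+1+1+1) k, L2A (n+1+1+1) l]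
  simp only [u4, u3, u2]; ring

/-! ### Coefficientwise nonnegativity of all sorted wedge coordinates -/

lemma w2_nn : ∀ n i j, i ≤ j → Pn (w2 n i j) := by
  intro n
  induction n with
  | zero =>
    intro i j hij
    rcases Nat.eq_or_lt_of_le hij with h | h
    · subst h; rw [w2_diag]; exact Pn_zero
    · obtain ⟨j', rfl⟩ : ∃ j', j = j' + 1 := ⟨j - 1, by omega⟩
      have hz : a 0 (j' + 1) = 0 := a_zero_succ j'
      have : w2 0 i (j'+1) = a 0 i * a 1 (j'+1) := by
        simp only [w2, hz]; ring
      rw [this]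
      exact Pn_mul (Pn_a 0 i) (Pn_a 1 (j'+1))
  | succ n ih =>
    -- first, nonnegativity of the intermediate coordinates
    have hu : ∀ i j, i ≤ j → Pn (u2 n i j) := by
      intro i j hij
      rcases Nat.eq_or_lt_of_le hij with h | h
      · subst h; rw [u2_diag]; exact Pn_zero
      · rw [U2]
        refine Pn_add (Pn_add (Pn_add (ih i j hij) ?_) ?_) ?_
        · exact Pn_mul (Pn_castSucc j) (ih i (j+1) (by omega))
        · exact Pn_mul (Pn_castSucc i) (ih (i+1) j (by omega))
        · exact Pn_mul (Pn_castSucc i) (Pn_mul (Pn_castSucc j) (ih (i+1) (j+1) (by omega)))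
    intro i j hij
    rcases Nat.eq_or_lt_of_le hij with h | h
    · subst h; rw [w2_diag]; exact Pn_zero
    · obtain ⟨j', rfl⟩ : ∃ j', j = j' + 1 := ⟨j - 1, by omega⟩
      cases i with
      | zero =>
        rw [W2S0]
        exact Pn_add (Pn_mul Pn_X (hu 0 j' (by omega)))
          (Pn_mul (Pn_pow Pn_X 2) (hu 0 (j'+1) (by omega)))
      | succ i' =>
        rw [W2S]
        refine Pn_add (Pn_add (Pn_add (hu i' j' (by omega))
          (Pn_mul Pn_X (hu i' (j'+1) (by omega))))
          (Pn_mul Pn_X (hu (i'+1) j' (by omega))))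
          (Pn_mul (Pn_pow Pn_X 2) (hu (i'+1) (j'+1) (by omega)))

lemma w3_nn : ∀ n i j k, i ≤ j → j ≤ k → Pn (w3 n i j k) := by
  intro n
  induction n with
  | zero =>
    intro i j k hij hjk
    rcases Nat.eq_or_lt_of_le hij with h | h
    · subst h; rw [w3_eq12]; exact Pn_zero
    rcases Nat.eq_or_lt_of_le hjk with h' | h'
    · subst h'; rw [w3_eq23]; exact Pn_zero
    obtain ⟨j', rfl⟩ : ∃ j', j = j' + 1 := ⟨j - 1, by omega⟩
    obtain ⟨k', rfl⟩ : ∃ k', k = k' + 1 := ⟨k - 1, by omega⟩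
    have : w3 0 i (j'+1) (k'+1) = a 0 i * w2 1 (j'+1) (k'+1) := by
      simp only [w3, a_zero_succ]; ring
    rw [this]
    exact Pn_mul (Pn_a 0 i) (w2_nn 1 (j'+1) (k'+1) (by omega))
  | succ n ih =>
    have hu : ∀ i j k, i ≤ j → j ≤ k → Pn (u3 n i j k) := by
      intro i j k hij hjk
      rcases Nat.eq_or_lt_of_le hij with h | h
      · subst h; rw [u3_eq12]; exact Pn_zero
      rcases Nat.eq_or_lt_of_le hjk with h' | h'
      · subst h'; rw [u3_eq23]; exact Pn_zero
      rw [U3]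
      have c := Pn_castSucc
      refine Pn_add (Pn_add (Pn_add (Pn_add (Pn_add (Pn_add (Pn_add
        (ih i j k (by omega) (by omega)) ?_) ?_) ?_) ?_) ?_) ?_) ?_
      · exact Pn_mul (c k) (ih i j (k+1) (by omega) (by omega))
      · exact Pn_mul (c j) (ih i (j+1) k (by omega) (by omega))
      · exact Pn_mul (c j) (Pn_mul (c k) (ih i (j+1) (k+1) (by omega) (by omega)))
      · exact Pn_mul (c i) (ih (i+1) j k (by omega) (by omega))
      · exact Pn_mul (c i) (Pn_mul (c k) (ih (i+1) j (k+1) (by omega) (by omega)))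
      · exact Pn_mul (c i) (Pn_mul (c j) (ih (i+1) (j+1) k (by omega) (by omega)))
      · exact Pn_mul (c i) (Pn_mul (c j) (Pn_mul (c k)
          (ih (i+1) (j+1) (k+1) (by omega) (by omega))))
    intro i j k hij hjk
    rcases Nat.eq_or_lt_of_le hij with h | h
    · subst h; rw [w3_eq12]; exact Pn_zero
    rcases Nat.eq_or_lt_of_le hjk with h' | h'
    · subst h'; rw [w3_eq23]; exact Pn_zero
    obtain ⟨j', rfl⟩ : ∃ j', j = j' + 1 := ⟨j - 1, by omega⟩
    obtain ⟨k', rfl⟩ : ∃ k', k = k' + 1 := ⟨k - 1, by omega⟩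
    have px := Pn_X
    have px2 := Pn_pow Pn_X 2
    have px3 := Pn_pow Pn_X 3
    cases i with
    | zero =>
      rw [W3S0]
      refine Pn_add (Pn_add (Pn_add
        (Pn_mul px (hu 0 j' k' (by omega) (by omega)))
        (Pn_mul px2 (hu 0 j' (k'+1) (by omega) (by omega))))
        (Pn_mul px2 (hu 0 (j'+1) k' (by omega) (by omega))))
        (Pn_mul px3 (hu 0 (j'+1) (k'+1) (by omega) (by omega)))
    | succ i' =>
      rw [W3S]
      refine Pn_add (Pn_add (Pn_add (Pn_add (Pn_add (Pn_add (Pn_add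
        (hu i' j' k' (by omega) (by omega))
        (Pn_mul px (hu i' j' (k'+1) (by omega) (by omega))))
        (Pn_mul px (hu i' (j'+1) k' (by omega) (by omega))))
        (Pn_mul px2 (hu i' (j'+1) (k'+1) (by omega) (by omega))))
        (Pn_mul px (hu (i'+1) j' k' (by omega) (by omega))))
        (Pn_mul px2 (hu (i'+1) j' (k'+1) (by omega) (by omega))))
        (Pn_mul px2 (hu (i'+1) (j'+1) k' (by omega) (by omega))))
        (Pn_mul px3 (hu (i'+1) (j'+1) (k'+1) (by omega) (by omega)))

lemma w4_nn : ∀ n i j k l, i ≤ j → j ≤ k → k ≤ l → Pn (w4 n i j k l) := by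
  intro n
  induction n with
  | zero =>
    intro i j k l hij hjk hkl
    rcases Nat.eq_or_lt_of_le hij with h | h
    · subst h; rw [w4_eq12]; exact Pn_zero
    rcases Nat.eq_or_lt_of_le hjk with h' | h'
    · subst h'; rw [w4_eq23]; exact Pn_zero
    rcases Nat.eq_or_lt_of_le hkl with h'' | h''
    · subst h''; rw [w4_eq34]; exact Pn_zero
    obtain ⟨j', rfl⟩ : ∃ j', j = j' + 1 := ⟨j - 1, by omega⟩
    obtain ⟨k', rfl⟩ : ∃ k', k = k' + 1 := ⟨k - 1, by omega⟩
    obtain ⟨l', rfl⟩ : ∃ l', l = l' + 1 := ⟨l - 1, by omega⟩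
    have : w4 0 i (j'+1) (k'+1) (l'+1) = a 0 i * w3 1 (j'+1) (k'+1) (l'+1) := by
      simp only [w4, a_zero_succ]; ring
    rw [this]
    exact Pn_mul (Pn_a 0 i) (w3_nn 1 (j'+1) (k'+1) (l'+1) (by omega) (by omega))
  | succ n ih =>
    have hu : ∀ i j k l, i ≤ j → j ≤ k → k ≤ l → Pn (u4 n i j k l) := by
      intro i j k l hij hjk hkl
      rcases Nat.eq_or_lt_of_le hij with h | h
      · subst h; rw [u4_eq12]; exact Pn_zero
      rcases Nat.eq_or_lt_of_le hjk with h' | h'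
      · subst h'; rw [u4_eq23]; exact Pn_zero
      rcases Nat.eq_or_lt_of_le hkl with h'' | h''
      · subst h''; rw [u4_eq34]; exact Pn_zero
      rw [U4]
      have c := Pn_castSucc
      refine Pn_add (Pn_add (Pn_add (Pn_add (Pn_add (Pn_add (Pn_add (Pn_add (Pn_add
        (Pn_add (Pn_add (Pn_add (Pn_add (Pn_add (Pn_add
        (ih i j k l (by omega) (by omega) (by omega)) ?_) ?_) ?_) ?_) ?_) ?_) ?_) ?_)
        ?_) ?_) ?_) ?_) ?_) ?_) ?_
      · exact Pn_mul (c l) (ih i j k (l+1) (by omega) (by omega) (by omega))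
      · exact Pn_mul (c k) (ih i j (k+1) l (by omega) (by omega) (by omega))
      · exact Pn_mul (c k) (Pn_mul (c l) (ih i j (k+1) (l+1) (by omega) (by omega) (by omega)))
      · exact Pn_mul (c j) (ih i (j+1) k l (by omega) (by omega) (by omega))
      · exact Pn_mul (c j) (Pn_mul (c l) (ih i (j+1) k (l+1) (by omega) (by omega) (by omega)))
      · exact Pn_mul (c j) (Pn_mul (c k) (ih i (j+1) (k+1) l (by omega) (by omega) (by omega)))
      · exact Pn_mul (c j) (Pn_mul (c k) (Pn_mul (c l)
          (ih i (j+1) (k+1) (l+1) (by omega) (by omega) (by omega))))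
      · exact Pn_mul (c i) (ih (i+1) j k l (by omega) (by omega) (by omega))
      · exact Pn_mul (c i) (Pn_mul (c l) (ih (i+1) j k (l+1) (by omega) (by omega) (by omega)))
      · exact Pn_mul (c i) (Pn_mul (c k) (ih (i+1) j (k+1) l (by omega) (by omega) (by omega)))
      · exact Pn_mul (c i) (Pn_mul (c k) (Pn_mul (c l)
          (ih (i+1) j (k+1) (l+1) (by omega) (by omega) (by omega))))
      · exact Pn_mul (c i) (Pn_mul (c j) (ih (i+1) (j+1) k l (by omega) (by omega) (by omega)))
      · exact Pn_mul (c i) (Pn_mul (c j) (Pn_mul (c l)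
          (ih (i+1) (j+1) k (l+1) (by omega) (by omega) (by omega))))
      · exact Pn_mul (c i) (Pn_mul (c j) (Pn_mul (c k)
          (ih (i+1) (j+1) (k+1) l (by omega) (by omega) (by omega))))
      · exact Pn_mul (c i) (Pn_mul (c j) (Pn_mul (c k) (Pn_mul (c l)
          (ih (i+1) (j+1) (k+1) (l+1) (by omega) (by omega) (by omega)))))
    intro i j k l hij hjk hkl
    rcases Nat.eq_or_lt_of_le hij with h | h
    · subst h; rw [w4_eq12]; exact Pn_zero
    rcases Nat.eq_or_lt_of_le hjk with h' | h'
    · subst h'; rw [w4_eq23]; exact Pn_zero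
    rcases Nat.eq_or_lt_of_le hkl with h'' | h''
    · subst h''; rw [w4_eq34]; exact Pn_zero
    obtain ⟨j', rfl⟩ : ∃ j', j = j' + 1 := ⟨j - 1, by omega⟩
    obtain ⟨k', rfl⟩ : ∃ k', k = k' + 1 := ⟨k - 1, by omega⟩
    obtain ⟨l', rfl⟩ : ∃ l', l = l' + 1 := ⟨l - 1, by omega⟩
    have px := Pn_X
    have px2 := Pn_pow Pn_X 2
    have px3 := Pn_pow Pn_X 3
    have px4 := Pn_pow Pn_X 4
    cases i with
    | zero =>
      rw [W4S0]
      refine Pn_add (Pn_add (Pn_add (Pn_add (Pn_add (Pn_add (Pn_add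
        (Pn_mul px (hu 0 j' k' l' (by omega) (by omega) (by omega)))
        (Pn_mul px2 (hu 0 j' k' (l'+1) (by omega) (by omega) (by omega))))
        (Pn_mul px2 (hu 0 j' (k'+1) l' (by omega) (by omega) (by omega))))
        (Pn_mul px3 (hu 0 j' (k'+1) (l'+1) (by omega) (by omega) (by omega))))
        (Pn_mul px2 (hu 0 (j'+1) k' l' (by omega) (by omega) (by omega))))
        (Pn_mul px3 (hu 0 (j'+1) k' (l'+1) (by omega) (by omega) (by omega))))
        (Pn_mul px3 (hu 0 (j'+1) (k'+1) l' (by omega) (by omega) (by omega))))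
        (Pn_mul px4 (hu 0 (j'+1) (k'+1) (l'+1) (by omega) (by omega) (by omega)))
    | succ i' =>
      rw [W4S]
      refine Pn_add (Pn_add (Pn_add (Pn_add (Pn_add (Pn_add (Pn_add (Pn_add (Pn_add
        (Pn_add (Pn_add (Pn_add (Pn_add (Pn_add (Pn_add
        (hu i' j' k' l' (by omega) (by omega) (by omega))
        (Pn_mul px (hu i' j' k' (l'+1) (by omega) (by omega) (by omega))))
        (Pn_mul px (hu i' j' (k'+1) l' (by omega) (by omega) (by omega))))
        (Pn_mul px2 (hu i' j' (k'+1) (l'+1) (by omega) (by omega) (by omega))))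
        (Pn_mul px (hu i' (j'+1) k' l' (by omega) (by omega) (by omega))))
        (Pn_mul px2 (hu i' (j'+1) k' (l'+1) (by omega) (by omega) (by omega))))
        (Pn_mul px2 (hu i' (j'+1) (k'+1) l' (by omega) (by omega) (by omega))))
        (Pn_mul px3 (hu i' (j'+1) (k'+1) (l'+1) (by omega) (by omega) (by omega))))
        (Pn_mul px (hu (i'+1) j' k' l' (by omega) (by omega) (by omega))))
        (Pn_mul px2 (hu (i'+1) j' k' (l'+1) (by omega) (by omega) (by omega))))
        (Pn_mul px2 (hu (i'+1) j' (k'+1) l' (by omega) (by omega) (by omega))))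
        (Pn_mul px3 (hu (i'+1) j' (k'+1) (l'+1) (by omega) (by omega) (by omega))))
        (Pn_mul px2 (hu (i'+1) (j'+1) k' l' (by omega) (by omega) (by omega))))
        (Pn_mul px3 (hu (i'+1) (j'+1) k' (l'+1) (by omega) (by omega) (by omega))))
        (Pn_mul px3 (hu (i'+1) (j'+1) (k'+1) l' (by omega) (by omega) (by omega))))
        (Pn_mul px4 (hu (i'+1) (j'+1) (k'+1) (l'+1) (by omega) (by omega) (by omega)))

/-! ### Identities expressing the iterated `Lq` in manifestly nonnegative form -/

lemma T1' (n : ℕ) : a n 0 * a (n+2) 0 - a (n+1) 0 ^ 2 = X * w2 n 0 1 := by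
  have e1 : a (n+1) 0 = X * a n 0 + X * a n 1 := aS0 n
  have e2 : a (n+2) 0 = X * a (n+1) 0 + X * a (n+1) 1 := aS0 (n+1)
  simp only [w2]
  linear_combination a n 0 * e2 - a (n+1) 0 * e1

lemma T1 (n : ℕ) : Lq bellPoly n = X * w2 n 0 1 := by
  show bellPoly n * bellPoly (n+2) - bellPoly (n+1) ^ 2 = X * w2 n 0 1
  rw [bell_eq n, bell_eq (n+1), bell_eq (n+2)]
  exact T1' n

/-- One step of the second compound of the production matrix, at the corner. -/
lemma lamsq (n : ℕ) : w2 (n+1) 0 1 =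
    X^2 * (w2 n 0 1 + 2 * w2 n 0 2 + 2 * w2 n 1 2) := by
  simp only [w2]
  rw [aS0 (n+1), aS1 (n+1), aS0 n, aS1 n]
  ring

lemma pluck2a (n : ℕ) : w2 n 0 1 * w2 (n+1) 0 2 - w2 n 0 2 * w2 (n+1) 0 1
    = a (n+1) 0 * w3 n 0 1 2 := by
  simp only [w2, w3]; ring

lemma pluck2b (n : ℕ) : w2 n 0 1 * w2 (n+1) 1 2 - w2 n 1 2 * w2 (n+1) 0 1
    = a (n+1) 1 * w3 n 0 1 2 := by
  simp only [w2, w3]; ring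

lemma K2 (n : ℕ) : w2 n 0 1 * w2 (n+2) 0 1 - w2 (n+1) 0 1 ^ 2
    = 2 * X^2 * (w3 n 0 1 2 * (a (n+1) 0 + a (n+1) 1)) := by
  have h1 : w2 (n+2) 0 1 = X^2 * (w2 (n+1) 0 1 + 2 * w2 (n+1) 0 2 + 2 * w2 (n+1) 1 2) :=
    lamsq (n+1)
  have h2 := lamsq n
  linear_combination w2 n 0 1 * h1 - w2 (n+1) 0 1 * h2
    + 2*X^2*(pluck2a n) + 2*X^2*(pluck2b n)

lemma LqLq (n : ℕ) : Lq (Lq bellPoly) n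
    = 2 * X^4 * (w3 n 0 1 2 * (a (n+1) 0 + a (n+1) 1)) := by
  show Lq bellPoly n * Lq bellPoly (n+2) - Lq bellPoly (n+1) ^ 2 = _
  rw [T1 n, T1 (n+1), T1 (n+2)]
  linear_combination X^2 * (K2 n)

/-- One step of the third compound of the production matrix, at the corner. -/
lemma lam3 (n : ℕ) : w3 (n+1) 0 1 2 =
    X^3 * (w3 n 0 1 2 + 3 * w3 n 0 1 3 + 6 * w3 n 0 2 3 + 6 * w3 n 1 2 3) := by
  simp only [w3, w2]
  rw [aS0 (n+1+1), aS1 (n+1+1), aS2 (n+1+1), aS0 (n+1), aS1 (n+1), aS2 (n+1),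
    aS0 n, aS1 n, aS2 n]
  ring

lemma pluck3a (n : ℕ) : w3 n 0 1 2 * w3 (n+1) 0 1 3 - w3 n 0 1 3 * w3 (n+1) 0 1 2
    = w2 (n+1) 0 1 * w4 n 0 1 2 3 := by
  simp only [w4, w3, w2]; ring

lemma pluck3b (n : ℕ) : w3 n 0 1 2 * w3 (n+1) 0 2 3 - w3 n 0 2 3 * w3 (n+1) 0 1 2
    = w2 (n+1) 0 2 * w4 n 0 1 2 3 := by
  simp only [w4, w3, w2]; ring

lemma pluck3c (n : ℕ) : w3 n 0 1 2 * w3 (n+1) 1 2 3 - w3 n 1 2 3 * w3 (n+1) 0 1 2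
    = w2 (n+1) 1 2 * w4 n 0 1 2 3 := by
  simp only [w4, w3, w2]; ring

lemma K3 (n : ℕ) : w3 n 0 1 2 * w3 (n+2) 0 1 2 - w3 (n+1) 0 1 2 ^ 2
    = 3 * X^3 * (w4 n 0 1 2 3 * (w2 (n+1) 0 1 + 2 * w2 (n+1) 0 2 + 2 * w2 (n+1) 1 2)) := by
  have h1 : w3 (n+2) 0 1 2
      = X^3 * (w3 (n+1) 0 1 2 + 3 * w3 (n+1) 0 1 3 + 6 * w3 (n+1) 0 2 3
          + 6 * w3 (n+1) 1 2 3) := lam3 (n+1)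
  have h2 := lam3 n
  linear_combination w3 n 0 1 2 * h1 - w3 (n+1) 0 1 2 * h2
    + 3*X^3*(pluck3a n) + 6*X^3*(pluck3b n) + 6*X^3*(pluck3c n)

lemma LqLqLq (n : ℕ) : Lq (Lq (Lq bellPoly)) n
    = 4 * X^6 * ( X * (w3 n 0 1 2 * w3 (n+2) 0 1 2 * w2 (n+2) 0 1)
      + (a (n+3) 0)^2 * (3 * X^3 * (w4 n 0 1 2 3
          * (w2 (n+1) 0 1 + 2 * w2 (n+1) 0 2 + 2 * w2 (n+1) 1 2))) ) := by
  show Lq (Lq bellPoly) n * Lq (Lq bellPoly) (n+2) - Lq (Lq bellPoly) (n+1) ^ 2 = _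
  rw [LqLq n, LqLq (n+1), LqLq (n+2)]
  have hA : a (n+2) 0 = X * a (n+1) 0 + X * a (n+1) 1 := aS0 (n+1)
  have hB : a (n+3) 0 = X * a (n+2) 0 + X * a (n+2) 1 := aS0 (n+2)
  have hC : a (n+4) 0 = X * a (n+3) 0 + X * a (n+3) 1 := aS0 (n+3)
  have hS : a (n+2) 0 * a (n+4) 0 - a (n+3) 0 ^ 2 = X * w2 (n+2) 0 1 := T1' (n+2)
  have hK := K3 n
  linear_combination (4*X^6) * (
      -(w3 n 0 1 2 * w3 (n+2) 0 1 2 * a (n+4) 0) * hA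
      - (w3 n 0 1 2 * w3 (n+2) 0 1 2 * (X * (a (n+1) 0 + a (n+1) 1))) * hC
      + (w3 n 0 1 2 * w3 (n+2) 0 1 2) * hS
      + (w3 (n+1) 0 1 2 ^ 2 * (a (n+3) 0 + X * (a (n+2) 0 + a (n+2) 1))) * hB
      + (a (n+3) 0 ^ 2) * hK )

/-! ### Main theorem -/

/-- the Bell polynomials form a `3`-`q`-log-convex sequence:
`L(B)`, `L²(B)`, `L³(B)` all have nonnegative coefficients. -/
theorem bellPoly_three_q_log_convex :
    (∀ n i, 0 ≤ (Lq bellPoly n).coeff i) ∧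
    (∀ n i, 0 ≤ (Lq (Lq bellPoly) n).coeff i) ∧
    (∀ n i, 0 ≤ (Lq (Lq (Lq bellPoly)) n).coeff i) := by
  refine ⟨?_, ?_, ?_⟩
  · intro n i
    rw [T1 n]
    exact Pn_mul Pn_X (w2_nn n 0 1 (by omega)) i
  · intro n i
    rw [LqLq n]
    exact Pn_mul (Pn_mul Pn_ofNat2 (Pn_pow Pn_X 4))
      (Pn_mul (w3_nn n 0 1 2 (by omega) (by omega))
        (Pn_add (Pn_a (n+1) 0) (Pn_a (n+1) 1))) i
  · intro n i
    rw [LqLqLq n]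
    refine Pn_mul (Pn_mul Pn_ofNat4 (Pn_pow Pn_X 6)) (Pn_add ?_ ?_) i
    · exact Pn_mul Pn_X (Pn_mul (Pn_mul (w3_nn n 0 1 2 (by omega) (by omega))
        (w3_nn (n+2) 0 1 2 (by omega) (by omega))) (w2_nn (n+2) 0 1 (by omega)))
    · refine Pn_mul (Pn_pow (Pn_a (n+3) 0) 2)
        (Pn_mul (Pn_mul Pn_ofNat3 (Pn_pow Pn_X 3))
          (Pn_mul (w4_nn n 0 1 2 3 (by omega) (by omega) (by omega))
            (Pn_add (Pn_add (w2_nn (n+1) 0 1 (by omega))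
              (Pn_mul Pn_ofNat2 (w2_nn (n+1) 0 2 (by omega))))
              (Pn_mul Pn_ofNat2 (w2_nn (n+1) 1 2 (by omega))))))
end
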